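/- Let ψ : ℝ → ℝ be 2π-periodic, integrable, and continuous on (0,2π). For every compact K ⊂ (0,2π), sup_{t ∈ K} |(1/n)·(K_n' * ψ)(t)| → 0 as n → ∞, where K_n' is the derivative of the Fejér kernel and K_n' * ψ(t) := (1/(2π))∫_0^{2π} K_n'(x)ψ(t−x)dx. -/

import Mathlib

/-
The Fejér kernel is symmetric about `π`, so `K_n'` is odd about `π` and, `ψ` being periodic,
`∫₀^{2π} K_n'(x) ψ(t - x) dx = ∫₀^π K_n'(x) (ψ(t - x) - ψ(t + x)) dx`.
Writing `K_n' = sin(nx/2) g_n(x) / (n sin³(x/2))` with `g_n = fejerDerivNum n`, the bounds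
`|g_n(x)| ≤ n²x²/4` and `|g_n(x)| ≤ n sin(x/2) + 1` give `|K_n'(x)| ≤ 8π³ n² / (1 + nx)²` on
`(0, π]`. This majorant has integral at most `n` and is at most `8π³/η²` on `[η, π]`. For `t ∈ K`
and small `x` the difference `ψ(t - x) - ψ(t + x)` is uniformly small, so the part of the
integral near `0` is `ε · O(n)` and the rest is `O(1/η²)`; dividing by `n` leaves `O(ε)`.
-/

open Real Filter

noncomputable def fejer (n : ℕ) (x : ℝ) : ℝ :=
  (1 / n) * (Real.sin (n * x / 2) / Real.sin (x / 2)) ^ 2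

open MeasureTheory Set Function Topology

lemma sq_div_one_add_mul_sq_le_inv_sq {a η x : ℝ} (ha : 0 ≤ a) (hη : 0 < η) (hηx : η ≤ x) :
    a ^ 2 / (1 + a * x) ^ 2 ≤ 1 / η ^ 2 := by
  have hx : 0 < 1 + a * x := by nlinarith [mul_nonneg ha (hη.le.trans hηx)]
  rw [div_le_div_iff₀ (by positivity) (by positivity), one_mul, ← mul_pow]
  exact pow_le_pow_left₀ (by positivity) (by nlinarith) 2

lemma intervalIntegrable_sq_div_one_add_mul_sq {a b : ℝ} (ha : 0 ≤ a) (hb : 0 ≤ b) :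
    IntervalIntegrable (fun x => a ^ 2 / (1 + a * x) ^ 2) volume 0 b := by
  refine (continuousOn_const.div (by fun_prop) fun x hx => ?_).intervalIntegrable
  rw [uIcc_of_le hb] at hx
  have : 0 < 1 + a * x := by nlinarith [hx.1]
  positivity

lemma integral_sq_div_one_add_mul_sq_le {a b : ℝ} (ha : 0 ≤ a) (hb : 0 ≤ b) :
    ∫ x in 0..b, a ^ 2 / (1 + a * x) ^ 2 ≤ a := by
  have hderiv : ∀ x ∈ uIcc 0 b,
      HasDerivAt (fun x => -a * (1 + a * x)⁻¹) (a ^ 2 / (1 + a * x) ^ 2) x := by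
    intro x hx
    rw [uIcc_of_le hb] at hx
    have hpos : 0 < 1 + a * x := by nlinarith [hx.1]
    exact ((((hasDerivAt_id x).const_mul a).const_add 1).inv hpos.ne').const_mul (-a)
      |>.congr_deriv (by simp only [id, mul_one]; ring)
  rw [intervalIntegral.integral_eq_sub_of_hasDerivAt hderiv
    (intervalIntegrable_sq_div_one_add_mul_sq ha hb), mul_zero, add_zero, inv_one]
  have : 0 ≤ a * (1 + a * b)⁻¹ := by positivity
  linarith

lemma Function.Periodic.intervalIntegrable_comp_sub {φ : ℝ → ℝ} {T : ℝ} (hφ : Periodic φ T)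
    (hT : T ≠ 0) (hint : IntervalIntegrable φ volume 0 T) (t a b : ℝ) :
    IntervalIntegrable (fun x => φ (t - x)) volume a b := by
  simpa using (hφ.intervalIntegrable₀ hT hint (t - a) (t - b)).comp_sub_left t

lemma Function.Periodic.intervalIntegrable_comp_add {φ : ℝ → ℝ} {T : ℝ} (hφ : Periodic φ T)
    (hT : T ≠ 0) (hint : IntervalIntegrable φ volume 0 T) (t a b : ℝ) :
    IntervalIntegrable (fun x => φ (t + x)) volume a b := by
  simpa using (hφ.intervalIntegrable₀ hT hint (t + a) (t + b)).comp_add_left t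

lemma Function.Periodic.integral_comp_sub_add_comp_add {φ : ℝ → ℝ} {c : ℝ}
    (hφ : Periodic φ (2 * c)) (hc : c ≠ 0) (hint : IntervalIntegrable φ volume 0 (2 * c)) (t : ℝ) :
    ∫ x in 0..c, (φ (t - x) + φ (t + x)) = ∫ x in 0..2 * c, φ x := by
  have h2c : 2 * c ≠ 0 := mul_ne_zero two_ne_zero hc
  have hφint := hφ.intervalIntegrable₀ h2c hint
  rw [intervalIntegral.integral_add (hφ.intervalIntegrable_comp_sub h2c hint t 0 c)
    (hφ.intervalIntegrable_comp_add h2c hint t 0 c),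
    intervalIntegral.integral_comp_sub_left, intervalIntegral.integral_comp_add_left, sub_zero,
    add_zero, intervalIntegral.integral_add_adjacent_intervals (hφint _ _) (hφint _ _)]
  simpa [show t - c + 2 * c = t + c by ring] using hφ.intervalIntegral_add_eq (t - c) 0

lemma integral_mul_comp_sub_eq_of_reflect_eq_neg {f ψ : ℝ → ℝ} {c t : ℝ}
    (hf : ∀ x, f (2 * c - x) = -f x) (hψ : Periodic ψ (2 * c))
    (h₁ : IntervalIntegrable (fun x => f x * ψ (t - x)) volume 0 c)
    (h₂ : IntervalIntegrable (fun x => f x * ψ (t + x)) volume 0 c) :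
    ∫ x in 0..2 * c, f x * ψ (t - x) = ∫ x in 0..c, f x * (ψ (t - x) - ψ (t + x)) := by
  have hreflect : ∀ x, f (2 * c - x) * ψ (t - (2 * c - x)) = -(f x * ψ (t + x)) := fun x => by
    rw [hf, show t - (2 * c - x) = t + x - 2 * c by ring, hψ.sub_eq, neg_mul]
  have hreflect' : ∀ x, -(f (2 * c - x) * ψ (t + (2 * c - x))) = f x * ψ (t - x) := fun x => by
    rw [hf, show t + (2 * c - x) = t - x + 2 * c by ring, hψ, neg_mul, neg_neg]
  have hupper_int : IntervalIntegrable (fun x => f x * ψ (t - x)) volume c (2 * c) := by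
    convert (h₂.comp_sub_left (2 * c)).neg.symm using 1
    · exact funext fun x => (hreflect' x).symm
    · ring
    · ring
  have hupper : ∫ x in c..2 * c, f x * ψ (t - x) = -∫ x in 0..c, f x * ψ (t + x) := by
    have h := intervalIntegral.integral_comp_sub_left (fun x => f x * ψ (t - x)) (2 * c)
      (a := 0) (b := c)
    rw [sub_zero, show 2 * c - c = c by ring] at h
    simp only [← h, hreflect, intervalIntegral.integral_neg]
  rw [← intervalIntegral.integral_add_adjacent_intervals h₁ hupper_int, hupper, ← sub_eq_add_neg,
    ← intervalIntegral.integral_sub h₁ h₂]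
  simp only [mul_sub]

lemma IsCompact.exists_pos_forall_abs_comp_sub_sub_comp_add_le {f : ℝ → ℝ} {K : Set ℝ}
    (hK : IsCompact K) (hf : ∀ a ∈ K, ContinuousAt f a) {ε : ℝ} (hε : 0 < ε) :
    ∃ η > 0, ∀ t ∈ K, ∀ x ∈ Ioc 0 η, |f (t - x) - f (t + x)| ≤ ε := by
  obtain ⟨δ, hδ, hclose⟩ := Metric.mem_uniformity_dist.1
    (hK.uniformContinuousAt_of_continuousAt f hf (Metric.dist_mem_uniformity (half_pos hε)))
  refine ⟨δ / 2, half_pos hδ, fun t ht x hx => ?_⟩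
  have hdist : ∀ y, |y| ≤ δ / 2 → dist (f t) (f (t + y)) < ε / 2 := fun y hy =>
    hclose (by rw [dist_eq, sub_add_cancel_left, abs_neg]; linarith) ht
  have hx' : |x| ≤ δ / 2 := by rw [abs_of_pos hx.1]; exact hx.2
  have h₁ := hdist (-x) (by rwa [abs_neg])
  have h₂ := hdist x hx'
  rw [← sub_eq_add_neg] at h₁
  rw [← dist_eq]
  linarith [dist_triangle_left (f (t - x)) (f (t + x)) (f t)]

lemma div_pi_le_sin_half {x : ℝ} (hx0 : 0 ≤ x) (hxπ : x ≤ π) : x / π ≤ sin (x / 2) := by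
  have := mul_le_sin (x := x / 2) (by positivity) (by linarith)
  rwa [show 2 / π * (x / 2) = x / π by ring] at this

noncomputable def fejerDerivNum (n : ℕ) (x : ℝ) : ℝ :=
  n * cos (n * x / 2) * sin (x / 2) - sin (n * x / 2) * cos (x / 2)

lemma hasDerivAt_fejerDerivNum (n : ℕ) (x : ℝ) :
    HasDerivAt (fejerDerivNum n) ((1 - (n : ℝ) ^ 2) / 2 * (sin (x / 2) * sin (n * x / 2))) x := by
  have hn : HasDerivAt (fun y : ℝ => n * y / 2) (n / 2) x := by
    simpa using ((hasDerivAt_id x).const_mul (n : ℝ)).div_const 2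
  have h1 : HasDerivAt (fun y : ℝ => y / 2) (1 / 2) x := by
    simpa using (hasDerivAt_id x).div_const 2
  exact (((hn.cos.const_mul (n : ℝ)).mul h1.sin).sub (hn.sin.mul h1.cos)).congr_deriv (by ring)

lemma abs_fejerDerivNum_le_sq {n : ℕ} (hn : 0 < n) {x : ℝ} (hx : 0 ≤ x) :
    |fejerDerivNum n x| ≤ n ^ 2 * x ^ 2 / 4 := by
  have hn1 : (1 : ℝ) ≤ n := by exact_mod_cast hn
  have hderiv_le : ∀ y ∈ Ico 0 x,
      ‖(1 - (n : ℝ) ^ 2) / 2 * (sin (y / 2) * sin (n * y / 2))‖ ≤ n ^ 2 * x / 4 := by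
    rintro y ⟨hy0, hyx⟩
    have hsin : |sin (y / 2)| ≤ x / 2 :=
      abs_sin_le_abs.trans (by rw [abs_of_nonneg (by linarith)]; linarith)
    rw [Real.norm_eq_abs, abs_mul, abs_mul, abs_div, abs_of_nonpos (by nlinarith), abs_two]
    calc -(1 - (n : ℝ) ^ 2) / 2 * (|sin (y / 2)| * |sin (n * y / 2)|)
        ≤ n ^ 2 / 2 * (x / 2 * 1) := by
          gcongr ?_ * (?_ * ?_)
          · linarith
          · exact abs_sin_le_one _
      _ = n ^ 2 * x / 4 := by ring
  have hmvt := norm_image_sub_le_of_norm_deriv_le_segment'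
    (fun y _ => (hasDerivAt_fejerDerivNum n y).hasDerivWithinAt) hderiv_le x ⟨hx, le_rfl⟩
  have hzero : fejerDerivNum n 0 = 0 := by simp [fejerDerivNum]
  rw [hzero, sub_zero, Real.norm_eq_abs] at hmvt
  exact hmvt.trans_eq (by ring)

lemma abs_fejerDerivNum_le (n : ℕ) (x : ℝ) :
    |fejerDerivNum n x| ≤ n * |sin (x / 2)| + 1 := by
  refine (abs_sub _ _).trans (add_le_add ?_ ?_)
  · rw [abs_mul, abs_mul, Nat.abs_cast]
    exact mul_le_mul_of_nonneg_right
      (mul_le_of_le_one_right (Nat.cast_nonneg n) (abs_cos_le_one _)) (abs_nonneg _)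
  · rw [abs_mul]
    exact mul_le_one₀ (abs_sin_le_one _) (abs_nonneg _) (abs_cos_le_one _)

lemma hasDerivAt_fejer {n : ℕ} (hn : 0 < n) {x : ℝ} (hx : sin (x / 2) ≠ 0) :
    HasDerivAt (fejer n) (sin (n * x / 2) * fejerDerivNum n x / (n * sin (x / 2) ^ 3)) x := by
  have hn0 : (n : ℝ) ≠ 0 := by positivity
  have hnx : HasDerivAt (fun y : ℝ => n * y / 2) (n / 2) x := by
    simpa using ((hasDerivAt_id x).const_mul (n : ℝ)).div_const 2
  have h1 : HasDerivAt (fun y : ℝ => y / 2) (1 / 2) x := by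
    simpa using (hasDerivAt_id x).div_const 2
  refine (((hnx.sin.div h1.sin hx).pow 2).const_mul (1 / (n : ℝ))).congr_deriv ?_
  simp only [fejerDerivNum, Pi.div_apply]
  rw [div_pow]
  field_simp
  ring

lemma fejer_two_pi_sub (n : ℕ) (x : ℝ) : fejer n (2 * π - x) = fejer n x := by
  have hden : sin ((2 * π - x) / 2) = sin (x / 2) := by
    rw [show (2 * π - x) / 2 = π - x / 2 by ring, sin_pi_sub]
  have hnum : sin (n * (2 * π - x) / 2) ^ 2 = sin (n * x / 2) ^ 2 := by
    rw [show (n : ℝ) * (2 * π - x) / 2 = n * π - n * x / 2 by ring, sin_sub, sin_nat_mul_pi,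
      zero_mul, zero_sub, neg_sq, mul_pow, cos_nat_mul_pi, ← pow_mul, mul_comm n 2, pow_mul,
      neg_one_sq, one_pow, one_mul]
  simp only [fejer, div_pow, hden, hnum]

lemma deriv_fejer_two_pi_sub (n : ℕ) (x : ℝ) :
    deriv (fejer n) (2 * π - x) = -deriv (fejer n) x := by
  have h := deriv_comp_const_sub (f := fejer n) (a := 2 * π) (x := x)
  simp only [fejer_two_pi_sub] at h
  rw [h, neg_neg]

lemma abs_deriv_fejer_le_of_mul_le_one {n : ℕ} (hn : 0 < n) {x : ℝ} (hx0 : 0 < x)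
    (hxπ : x ≤ π) (hnx : n * x ≤ 1) :
    |deriv (fejer n) x| ≤ 8 * π ^ 3 * n ^ 2 / (1 + n * x) ^ 2 := by
  have hs := div_pi_le_sin_half hx0.le hxπ
  have hs0 : 0 < sin (x / 2) := (by positivity : 0 < x / π).trans_le hs
  have hsin : |sin (n * x / 2)| ≤ n * x / 2 :=
    abs_sin_le_abs.trans_eq (abs_of_nonneg (by positivity))
  rw [(hasDerivAt_fejer hn hs0.ne').deriv, abs_div, abs_mul,
    abs_of_pos (by positivity : (0 : ℝ) < n * sin (x / 2) ^ 3)]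
  calc |sin (n * x / 2)| * |fejerDerivNum n x| / (n * sin (x / 2) ^ 3)
      ≤ (n * x / 2) * (n ^ 2 * x ^ 2 / 4) / (n * (x / π) ^ 3) := by
        gcongr
        exact abs_fejerDerivNum_le_sq hn hx0.le
    _ = π ^ 3 * n ^ 2 / 8 := by field_simp; ring
    _ ≤ 8 * π ^ 3 * n ^ 2 / (1 + n * x) ^ 2 := by
        rw [le_div_iff₀ (by positivity)]
        have : (1 + n * x) ^ 2 ≤ 4 := by nlinarith [mul_pos (Nat.cast_pos.2 hn : (0 : ℝ) < n) hx0]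
        nlinarith [mul_le_mul_of_nonneg_left this (by positivity : (0 : ℝ) ≤ π ^ 3 * n ^ 2 / 8),
          (by positivity : (0 : ℝ) ≤ π ^ 3 * n ^ 2)]

lemma abs_deriv_fejer_le_of_one_le_mul {n : ℕ} (hn : 0 < n) {x : ℝ} (hx0 : 0 < x)
    (hxπ : x ≤ π) (hnx : 1 ≤ n * x) :
    |deriv (fejer n) x| ≤ 8 * π ^ 3 * n ^ 2 / (1 + n * x) ^ 2 := by
  have hs := div_pi_le_sin_half hx0.le hxπ
  have hs0 : 0 < sin (x / 2) := (by positivity : 0 < x / π).trans_le hs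
  have hxs : x ≤ π * sin (x / 2) := by rwa [div_le_iff₀' pi_pos] at hs
  rw [(hasDerivAt_fejer hn hs0.ne').deriv, abs_div, abs_mul,
    abs_of_pos (by positivity : (0 : ℝ) < n * sin (x / 2) ^ 3)]
  calc |sin (n * x / 2)| * |fejerDerivNum n x| / (n * sin (x / 2) ^ 3)
      ≤ 1 * (n * sin (x / 2) + 1) / (n * sin (x / 2) ^ 3) := by
        gcongr
        · exact abs_sin_le_one _
        · simpa only [abs_of_pos hs0] using abs_fejerDerivNum_le n x
    _ ≤ 2 * π / sin (x / 2) ^ 2 := by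
        rw [div_le_div_iff₀ (by positivity) (by positivity)]
        have : 1 ≤ π * (n * sin (x / 2)) := by nlinarith [Nat.cast_nonneg (α := ℝ) n]
        have : n * sin (x / 2) + 1 ≤ 2 * π * (n * sin (x / 2)) := by
          nlinarith [pi_gt_three, mul_pos (Nat.cast_pos.2 hn : (0 : ℝ) < n) hs0]
        nlinarith [mul_le_mul_of_nonneg_right this (sq_nonneg (sin (x / 2)))]
    _ ≤ 2 * π / (x / π) ^ 2 := by gcongr
    _ ≤ 8 * π ^ 3 * n ^ 2 / (1 + n * x) ^ 2 := by
        rw [div_le_div_iff₀ (by positivity) (by positivity)]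
        have : (1 + n * x) ^ 2 ≤ 4 * (n * x) ^ 2 := by nlinarith
        field_simp
        nlinarith [pow_pos pi_pos 3]

lemma abs_deriv_fejer_le {n : ℕ} (hn : 0 < n) {x : ℝ} (hx0 : 0 < x) (hxπ : x ≤ π) :
    |deriv (fejer n) x| ≤ 8 * π ^ 3 * n ^ 2 / (1 + n * x) ^ 2 := by
  rcases le_total (n * x) 1 with hnx | hnx
  · exact abs_deriv_fejer_le_of_mul_le_one hn hx0 hxπ hnx
  · exact abs_deriv_fejer_le_of_one_le_mul hn hx0 hxπ hnx

lemma intervalIntegrable_deriv_fejer_mul {n : ℕ} (hn : 0 < n) {φ : ℝ → ℝ}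
    (hφ : IntervalIntegrable φ volume 0 π) :
    IntervalIntegrable (fun x => deriv (fejer n) x * φ x) volume 0 π := by
  rw [intervalIntegrable_iff_integrableOn_Ioc_of_le pi_pos.le] at hφ ⊢
  refine hφ.bdd_mul (c := 8 * π ^ 3 * n ^ 2) (measurable_deriv _).aestronglyMeasurable ?_
  filter_upwards [ae_restrict_mem measurableSet_Ioc] with x hx
  rw [Real.norm_eq_abs]
  have hden : 1 ≤ (1 + n * x) ^ 2 := one_le_pow₀ (le_add_of_nonneg_right (by nlinarith [hx.1]))
  exact (abs_deriv_fejer_le hn hx.1 hx.2).trans (div_le_self (by positivity) hden)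

lemma abs_deriv_fejer_mul_sub_le {n : ℕ} (hn : 0 < n) {x η ε a b : ℝ} (hx0 : 0 < x)
    (hxπ : x ≤ π) (hη : 0 < η) (hε : 0 ≤ ε) (hclose : x ≤ η → |a - b| ≤ ε) :
    |deriv (fejer n) x * (a - b)|
      ≤ 8 * π ^ 3 * ε * (n ^ 2 / (1 + n * x) ^ 2) + 8 * π ^ 3 / η ^ 2 * (|a| + |b|) := by
  have hD := abs_deriv_fejer_le hn hx0 hxπ
  rw [abs_mul]
  rcases le_or_gt x η with hxη | hxη
  · refine le_add_of_le_of_nonneg ?_ (by positivity)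
    calc |deriv (fejer n) x| * |a - b| ≤ 8 * π ^ 3 * n ^ 2 / (1 + n * x) ^ 2 * ε := by
          gcongr; exact hclose hxη
      _ = 8 * π ^ 3 * ε * (n ^ 2 / (1 + n * x) ^ 2) := by ring
  · refine le_add_of_nonneg_of_le (by positivity) (mul_le_mul ?_ (abs_sub _ _) (abs_nonneg _)
      (by positivity))
    rw [mul_div_assoc] at hD
    refine hD.trans ((mul_le_mul_of_nonneg_left ?_ (by positivity)).trans_eq (mul_one_div _ _))
    exact sq_div_one_add_mul_sq_le_inv_sq (by positivity) hη hxη.le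

lemma abs_integral_deriv_fejer_mul_sub_le {ψ : ℝ → ℝ} (hψ : Periodic ψ (2 * π))
    (hint : IntervalIntegrable ψ volume 0 (2 * π)) {n : ℕ} (hn : 0 < n) {t η ε : ℝ}
    (hη : 0 < η) (hε : 0 ≤ ε) (hclose : ∀ x ∈ Ioc 0 η, |ψ (t - x) - ψ (t + x)| ≤ ε) :
    |∫ x in 0..π, deriv (fejer n) x * (ψ (t - x) - ψ (t + x))|
      ≤ 8 * π ^ 3 * ε * n + 8 * π ^ 3 / η ^ 2 * ∫ x in 0..2 * π, |ψ x| := by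
  have hπ : (2 * π) ≠ 0 := by positivity
  have hmajorant_int : IntervalIntegrable (fun x => 8 * π ^ 3 * ε * (n ^ 2 / (1 + n * x) ^ 2))
      volume 0 π :=
    (intervalIntegrable_sq_div_one_add_mul_sq (by positivity) pi_pos.le).const_mul _
  have hψ_int : IntervalIntegrable (fun x => 8 * π ^ 3 / η ^ 2 * (|ψ (t - x)| + |ψ (t + x)|))
      volume 0 π :=
    ((hψ.intervalIntegrable_comp_sub hπ hint t 0 π).abs.add
      (hψ.intervalIntegrable_comp_add hπ hint t 0 π).abs).const_mul _
  have hψabs : Periodic (fun x => |ψ x|) (2 * π) := fun x => by simp only [hψ x]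
  calc |∫ x in 0..π, deriv (fejer n) x * (ψ (t - x) - ψ (t + x))|
      ≤ ∫ x in 0..π, (8 * π ^ 3 * ε * (n ^ 2 / (1 + n * x) ^ 2)
          + 8 * π ^ 3 / η ^ 2 * (|ψ (t - x)| + |ψ (t + x)|)) :=
        intervalIntegral.norm_integral_le_of_norm_le
          (f := fun x => deriv (fejer n) x * (ψ (t - x) - ψ (t + x))) pi_pos.le
          (ae_of_all _ fun x hx => abs_deriv_fejer_mul_sub_le hn hx.1 hx.2 hη hε
            fun hxη => hclose x ⟨hx.1, hxη⟩)
          (hmajorant_int.add hψ_int)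
    _ = 8 * π ^ 3 * ε * (∫ x in 0..π, n ^ 2 / (1 + n * x) ^ 2)
          + 8 * π ^ 3 / η ^ 2 * ∫ x in 0..π, (|ψ (t - x)| + |ψ (t + x)|) := by
        rw [intervalIntegral.integral_add hmajorant_int hψ_int, intervalIntegral.integral_const_mul,
          intervalIntegral.integral_const_mul]
    _ ≤ 8 * π ^ 3 * ε * n + 8 * π ^ 3 / η ^ 2 * ∫ x in 0..2 * π, |ψ x| := by
        rw [hψabs.integral_comp_sub_add_comp_add pi_pos.ne' hint.abs t]
        gcongr
        exact integral_sq_div_one_add_mul_sq_le (by positivity) pi_pos.le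

lemma abs_integral_deriv_fejer_mul_le {ψ : ℝ → ℝ} (hψ : Periodic ψ (2 * π))
    (hint : IntervalIntegrable ψ volume 0 (2 * π)) {n : ℕ} (hn : 0 < n) {t η ε : ℝ}
    (hη : 0 < η) (hε : 0 ≤ ε) (hclose : ∀ x ∈ Ioc 0 η, |ψ (t - x) - ψ (t + x)| ≤ ε) :
    |(1 / n) * ((1 / (2 * π)) * ∫ x in 0..2 * π, deriv (fejer n) x * ψ (t - x))|
      ≤ 4 * π ^ 2 * (ε + (∫ x in 0..2 * π, |ψ x|) / η ^ 2 / n) := by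
  have hπ : (2 * π) ≠ 0 := by positivity
  rw [integral_mul_comp_sub_eq_of_reflect_eq_neg (fun x => deriv_fejer_two_pi_sub n x) hψ
    (intervalIntegrable_deriv_fejer_mul hn (hψ.intervalIntegrable_comp_sub hπ hint t 0 π))
    (intervalIntegrable_deriv_fejer_mul hn (hψ.intervalIntegrable_comp_add hπ hint t 0 π)),
    abs_mul, abs_mul, abs_of_pos (by positivity : (0 : ℝ) < 1 / n),
    abs_of_pos (by positivity : 0 < 1 / (2 * π))]
  calc 1 / n * (1 / (2 * π) * |∫ x in 0..π, deriv (fejer n) x * (ψ (t - x) - ψ (t + x))|)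
      ≤ 1 / n * (1 / (2 * π)
          * (8 * π ^ 3 * ε * n + 8 * π ^ 3 / η ^ 2 * ∫ x in 0..2 * π, |ψ x|)) := by
        gcongr
        exact abs_integral_deriv_fejer_mul_sub_le hψ hint hn hη hε hclose
    _ = 4 * π ^ 2 * (ε + (∫ x in 0..2 * π, |ψ x|) / η ^ 2 / n) := by
        field_simp
        ring

theorem fejer_deriv_convolution_small (ψ : ℝ → ℝ)
    (hper : ∀ t : ℝ, ψ (t + 2 * π) = ψ t)
    (hint : IntervalIntegrable ψ MeasureTheory.volume 0 (2 * π))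
    (hcont : ContinuousOn ψ (Set.Ioo 0 (2 * π)))
    (K : Set ℝ) (hK : IsCompact K) (hKsub : K ⊆ Set.Ioo 0 (2 * π)) :
    TendstoUniformlyOn
      (fun n : ℕ => fun t : ℝ =>
        (1 / n) * ((1 / (2 * π)) * ∫ x in (0:ℝ)..(2 * π), deriv (fejer n) x * ψ (t - x)))
      (fun _ => 0) atTop K := by
  rw [Metric.tendstoUniformlyOn_iff]
  intro ε hε
  set ε' := ε / (8 * π ^ 2)
  obtain ⟨η, hη, hclose⟩ := hK.exists_pos_forall_abs_comp_sub_sub_comp_add_le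
    (fun a ha => hcont.continuousAt (isOpen_Ioo.mem_nhds (hKsub ha))) (by positivity : 0 < ε')
  have hbound : Tendsto (fun n : ℕ => 4 * π ^ 2 * (ε' + (∫ x in 0..2 * π, |ψ x|) / η ^ 2 / n))
      atTop (𝓝 (4 * π ^ 2 * (ε' + 0))) :=
    ((tendsto_const_div_atTop_nhds_zero_nat _).const_add ε').const_mul _
  have hlimit : 4 * π ^ 2 * (ε' + 0) < ε := by
    have : 4 * π ^ 2 * (ε' + 0) = ε / 2 := by simp only [ε']; field_simp; ring
    linarith
  filter_upwards [hbound.eventually_lt_const hlimit, eventually_gt_atTop 0] with n hn_lt hn t ht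
  rw [dist_zero_left, Real.norm_eq_abs]
  exact (abs_integral_deriv_fejer_mul_le hper hint hn hη (by positivity) (hclose t ht)).trans_lt
    hn_lt
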